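/- For every m ∈ ℕ, the F-trajectory of 2m + 3/2 diverges monotonically to +∞: the sequence (F^k(2m + 3/2))_{k≥0} is strictly increasing and tends to +∞. -/

import Mathlib

/-- The extension of the original Collatz function:
`Fx = x/2` if `⌊x⌋` is even, `3x+1` if `⌊x⌋` is odd. -/
noncomputable def F (x : ℝ) : ℝ := if Even ⌊x⌋ then x / 2 else 3 * x + 1

/-!
The points `n + 1/2` with `n` an odd integer form an `F`-invariant set: their floor is the odd
number `n`, so `F` acts there as `x ↦ 3x + 1`, sending `n + 1/2` to `(3n + 2) + 1/2` with
`3n + 2` odd again. Hence `F^[k] (n + 1/2) = 3^k (n + 1) - 1/2`, and `2m + 3/2` is such a point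
with `n + 1 = 2m + 2 > 0`.
-/

lemma F_of_odd_floor {x : ℝ} (hx : Odd ⌊x⌋) : F x = 3 * x + 1 :=
  if_neg (Int.not_even_iff_odd.mpr hx)

lemma F_odd_add_half {n : ℤ} (hn : Odd n) :
    F (n + 1 / 2) = ((3 * n + 2 : ℤ) : ℝ) + 1 / 2 := by
  have hfloor : ⌊(n : ℝ) + 1 / 2⌋ = n := by
    rw [Int.floor_intCast_add]
    norm_num
  rw [F_of_odd_floor (by rwa [hfloor])]
  push_cast
  ring

lemma iterate_F_odd_add_half {n : ℤ} (hn : Odd n) (k : ℕ) :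
    F^[k] (n + 1 / 2) = 3 ^ k * (n + 1) - 1 / 2 := by
  induction k generalizing n with
  | zero =>
    simp only [Function.iterate_zero_apply, pow_zero, one_mul]
    ring
  | succ k ih =>
    have hn' : Odd (3 * n + 2) := by
      rcases hn with ⟨j, rfl⟩
      exact ⟨3 * j + 2, by ring⟩
    rw [Function.iterate_succ_apply, F_odd_add_half hn, ih hn']
    push_cast
    ring

/-- For every `m ∈ ℕ`, the `F`-trajectory of `2m + 3/2` is strictly increasing and
diverges to `+∞`. -/
theorem F_trajectory_diverges (m : ℕ) :
    StrictMono (fun k : ℕ => F^[k] (2 * m + 3 / 2)) ∧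
    Filter.Tendsto (fun k : ℕ => F^[k] (2 * m + 3 / 2)) Filter.atTop Filter.atTop := by
  have hstart : (2 * m + 3 / 2 : ℝ) = ((2 * m + 1 : ℤ) : ℝ) + 1 / 2 := by
    push_cast
    ring
  have hclosed : (fun k : ℕ => F^[k] (2 * m + 3 / 2)) =
      fun k : ℕ => (3 : ℝ) ^ k * (2 * m + 2) - 1 / 2 := by
    funext k
    rw [hstart, iterate_F_odd_add_half (odd_two_mul_add_one (m : ℤ))]
    push_cast
    ring
  have hpos : (0 : ℝ) < 2 * m + 2 := by positivity
  have hbase : (1 : ℝ) < 3 := by norm_num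
  rw [hclosed]
  exact ⟨((pow_right_strictMono₀ hbase).mul_const hpos).add_const _,
    Filter.tendsto_atTop_add_const_right _ _
      ((tendsto_pow_atTop_atTop_of_one_lt hbase).atTop_mul_const hpos)⟩
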